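/- arXiv:2505.22972 — 3 statements merged into one kernel-verified Lean document; each statement's English description precedes it below -/
import Mathlib

section
/- Let 1 ≤ p ≤ q < ∞ and let λ, μ, ν, α, β be real numbers. Suppose the operator H_{λ,μ,ν}(a)(n) = Σ_{m=1}^∞ m^μ n^ν (m+n)^{-λ} a_m is bounded from ℓ^p_α to ℓ^q_β. Then λ ≥ μ + ν + 1 + (β+1)/q − (α+1)/p. -/
/-!
Test the operator on `a_m = (m+1)^s` with `α + s p < -1`, so that `a ∈ ℓ^p_α`. Keeping only the
`n + 1` terms with `m + 1 ∈ [n + 2, 2n + 2]`, on which the kernel is comparable to `(n+1)^(μ+ν-λ)`,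
gives `H a (n) ≳ (n+1)^(μ+ν-λ+s+1)`. Finiteness of the `ℓ^q_β` norm of `H a` then forces
`β + (μ+ν-λ+s+1) q < -1`, and letting `s` increase to `-(α+1)/p` gives the bound on `λ`.
-/

open scoped ENNReal

/-- Weighted `ℓ^p_θ` (quasi-)norm of a real sequence indexed by `m ≥ 1`
(here `m = i + 1` for `i : ℕ`), valued in `ℝ≥0∞`. -/
noncomputable def wnorm (p th : ℝ) (a : ℕ → ℝ) : ℝ≥0∞ :=
  (∑' m : ℕ, ENNReal.ofReal (((m : ℝ) + 1) ^ th * |a m| ^ p)) ^ (1 / p)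

/-- The discrete Hilbert-type operator `H_{λ,μ,ν}`, applied to `|a|`, valued
in `ℝ≥0∞` (the kernel is nonnegative). -/
noncomputable def Hop (lam mu nu : ℝ) (a : ℕ → ℝ) (n : ℕ) : ℝ≥0∞ :=
  ∑' m : ℕ, ENNReal.ofReal
    (((m : ℝ) + 1) ^ mu * ((n : ℝ) + 1) ^ nu /
      (((m : ℝ) + 1) + ((n : ℝ) + 1)) ^ lam * |a m|)

/-- Weighted `ℓ^q_β` norm of `H_{λ,μ,ν} a`. -/
noncomputable def outNorm (q be lam mu nu : ℝ) (a : ℕ → ℝ) : ℝ≥0∞ :=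
  (∑' n : ℕ, ENNReal.ofReal (((n : ℝ) + 1) ^ be) * (Hop lam mu nu a n) ^ q) ^ (1 / q)

/-- `H_{λ,μ,ν}` is bounded from `ℓ^p_α` to `ℓ^q_β`. -/
def BddOp (p q al be lam mu nu : ℝ) : Prop :=
  ∃ C : ℝ≥0∞, C ≠ ⊤ ∧ ∀ a : ℕ → ℝ, outNorm q be lam mu nu a ≤ C * wnorm p al a

lemma exists_pos_mul_rpow_le_rpow {k : ℝ} (hk : 1 ≤ k) (r : ℝ) :
    ∃ c > 0, ∀ N M : ℝ, 0 < N → N ≤ M → M ≤ k * N → c * N ^ r ≤ M ^ r := by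
  refine ⟨min 1 (k ^ r), lt_min one_pos (by positivity), fun N M hN hNM hMk => ?_⟩
  rcases le_total 0 r with hr | hr
  · calc min 1 (k ^ r) * N ^ r ≤ 1 * N ^ r := by gcongr; exact min_le_left _ _
      _ ≤ M ^ r := by rw [one_mul]; exact Real.rpow_le_rpow hN.le hNM hr
  · calc min 1 (k ^ r) * N ^ r ≤ k ^ r * N ^ r := by gcongr; exact min_le_right _ _
      _ = (k * N) ^ r := (Real.mul_rpow (by linarith) hN.le).symm
      _ ≤ M ^ r := Real.rpow_le_rpow_of_nonpos (hN.trans_le hNM) hMk hr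

lemma summable_nat_add_one_rpow_iff {r : ℝ} :
    Summable (fun n : ℕ => ((n : ℝ) + 1) ^ r) ↔ r < -1 := by
  rw [← Real.summable_nat_rpow, ← summable_nat_add_iff 1 (f := fun n : ℕ => (n : ℝ) ^ r)]
  simp only [Nat.cast_add, Nat.cast_one]

lemma tsum_ofReal_nat_add_one_rpow_ne_top_iff {r : ℝ} :
    ∑' n : ℕ, ENNReal.ofReal (((n : ℝ) + 1) ^ r) ≠ ⊤ ↔ r < -1 := by
  refine ⟨fun h => summable_nat_add_one_rpow_iff.mp ?_,
    fun h => (summable_nat_add_one_rpow_iff.mpr h).tsum_ofReal_ne_top⟩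
  have hnonneg (n : ℕ) : 0 ≤ ((n : ℝ) + 1) ^ r := by positivity
  simpa only [ENNReal.toReal_ofReal (hnonneg _)] using ENNReal.summable_toReal h

lemma wnorm_rpow_ne_top {p al s : ℝ} (hp : 0 < p) (h : al + s * p < -1) :
    wnorm p al (fun m => ((m : ℝ) + 1) ^ s) ≠ ⊤ := by
  have hterm : ∀ m : ℕ, ((m : ℝ) + 1) ^ al * |((m : ℝ) + 1) ^ s| ^ p
      = ((m : ℝ) + 1) ^ (al + s * p) := fun m => by
    have hm : (0 : ℝ) < m + 1 := by positivity
    rw [abs_of_nonneg (by positivity), ← Real.rpow_mul hm.le, ← Real.rpow_add hm]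
  simp only [wnorm, hterm]
  exact ENNReal.rpow_ne_top_of_nonneg (by positivity)
    (tsum_ofReal_nat_add_one_rpow_ne_top_iff.mpr h)

lemma exists_pos_mul_rpow_le_Hop_rpow (lam mu nu s : ℝ) :
    ∃ c > 0, ∀ n : ℕ, ENNReal.ofReal (c * ((n : ℝ) + 1) ^ (mu + nu - lam + s + 1))
      ≤ Hop lam mu nu (fun m => ((m : ℝ) + 1) ^ s) n := by
  obtain ⟨c₁, hc₁, h₁⟩ := exists_pos_mul_rpow_le_rpow one_le_two (mu + s)
  obtain ⟨c₂, hc₂, h₂⟩ := exists_pos_mul_rpow_le_rpow (k := 3) (by norm_num) (-lam)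
  refine ⟨c₁ * c₂, by positivity, fun n => ?_⟩
  set N : ℝ := n + 1
  have hN : 0 < N := by positivity
  have hterm : ∀ M : ℝ, N ≤ M → M ≤ 2 * N →
      c₁ * c₂ * N ^ (mu + nu - lam + s) ≤ M ^ mu * N ^ nu / (M + N) ^ lam * |M ^ s| := by
    intro M hNM hM2
    have hM : 0 < M := hN.trans_le hNM
    have e₁ := h₁ N M hN hNM hM2
    have e₂ := h₂ N (M + N) hN (by linarith) (by linarith)
    rw [abs_of_nonneg (by positivity), div_eq_mul_inv, ← Real.rpow_neg (by positivity)]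
    calc c₁ * c₂ * N ^ (mu + nu - lam + s)
        = (c₁ * N ^ (mu + s)) * (c₂ * N ^ (-lam)) * N ^ nu := by
          rw [show mu + nu - lam + s = mu + s + -lam + nu by ring, Real.rpow_add hN,
            Real.rpow_add hN]
          ring
      _ ≤ M ^ (mu + s) * (M + N) ^ (-lam) * N ^ nu := by gcongr
      _ = M ^ mu * N ^ nu * (M + N) ^ (-lam) * M ^ s := by rw [Real.rpow_add hM]; ring
  calc ENNReal.ofReal (c₁ * c₂ * N ^ (mu + nu - lam + s + 1))
      = ∑ _j ∈ Finset.range (n + 1), ENNReal.ofReal (c₁ * c₂ * N ^ (mu + nu - lam + s)) := by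
        rw [Finset.sum_const, Finset.card_range, nsmul_eq_mul, Real.rpow_add_one hN.ne',
          ← ENNReal.ofReal_natCast, ← ENNReal.ofReal_mul (by positivity)]
        congr 1
        push_cast
        ring
    _ ≤ ∑ j ∈ Finset.range (n + 1), ENNReal.ofReal
          ((((n + 1 + j : ℕ) : ℝ) + 1) ^ mu * N ^ nu / ((((n + 1 + j : ℕ) : ℝ) + 1) + N) ^ lam
            * |(((n + 1 + j : ℕ) : ℝ) + 1) ^ s|) := by
        gcongr ∑ _j ∈ _, ENNReal.ofReal ?_ with j hj
        have hjn : (j : ℝ) ≤ n := by exact_mod_cast Nat.lt_succ_iff.mp (Finset.mem_range.mp hj)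
        apply hterm <;> push_cast <;> linarith
    _ ≤ ∑' j : ℕ, ENNReal.ofReal
          ((((n + 1 + j : ℕ) : ℝ) + 1) ^ mu * N ^ nu / ((((n + 1 + j : ℕ) : ℝ) + 1) + N) ^ lam
            * |(((n + 1 + j : ℕ) : ℝ) + 1) ^ s|) := ENNReal.sum_le_tsum _
    _ ≤ Hop lam mu nu (fun m => ((m : ℝ) + 1) ^ s) n :=
        ENNReal.tsum_comp_le_tsum_of_injective (add_right_injective (n + 1)) _

lemma exponent_lt_of_bddOp {p q al be lam mu nu : ℝ} (hp : 0 < p) (hq : 0 < q)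
    (h : BddOp p q al be lam mu nu) {s : ℝ} (hs : al + s * p < -1) :
    be + (mu + nu - lam + s + 1) * q < -1 := by
  obtain ⟨C, hC, hbd⟩ := h
  set a : ℕ → ℝ := fun m => ((m : ℝ) + 1) ^ s
  set t := mu + nu - lam + s + 1
  obtain ⟨c, hc, hHop⟩ := exists_pos_mul_rpow_le_Hop_rpow lam mu nu s
  have hout : outNorm q be lam mu nu a ≠ ⊤ :=
    ne_top_of_le_ne_top (ENNReal.mul_ne_top hC (wnorm_rpow_ne_top hp hs)) (hbd a)
  have hsum : ∑' n : ℕ, ENNReal.ofReal (((n : ℝ) + 1) ^ be) * Hop lam mu nu a n ^ q ≠ ⊤ := by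
    intro htop
    exact hout (by rw [outNorm, htop]; exact ENNReal.top_rpow_of_pos (by positivity))
  have hterm (n : ℕ) : ENNReal.ofReal (c ^ q) * ENNReal.ofReal (((n : ℝ) + 1) ^ (be + t * q))
      ≤ ENNReal.ofReal (((n : ℝ) + 1) ^ be) * Hop lam mu nu a n ^ q := by
    have hN : (0 : ℝ) < n + 1 := by positivity
    calc ENNReal.ofReal (c ^ q) * ENNReal.ofReal (((n : ℝ) + 1) ^ (be + t * q))
        = ENNReal.ofReal (((n : ℝ) + 1) ^ be) * ENNReal.ofReal (c * ((n : ℝ) + 1) ^ t) ^ q := by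
          rw [ENNReal.ofReal_rpow_of_nonneg (by positivity) hq.le,
            ← ENNReal.ofReal_mul (by positivity), ← ENNReal.ofReal_mul (by positivity),
            Real.mul_rpow hc.le (by positivity),
            ← Real.rpow_mul hN.le, Real.rpow_add hN]
          ring_nf
      _ ≤ ENNReal.ofReal (((n : ℝ) + 1) ^ be) * Hop lam mu nu a n ^ q := by
          gcongr
          exact hHop n
  rw [← tsum_ofReal_nat_add_one_rpow_ne_top_iff]
  have hcq : ENNReal.ofReal (c ^ q) ≠ 0 := (ENNReal.ofReal_pos.mpr (by positivity)).ne'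
  refine (ENNReal.lt_top_of_mul_ne_top_right ?_ hcq).ne
  rw [← ENNReal.tsum_mul_left]
  exact ne_top_of_le_ne_top hsum (ENNReal.tsum_le_tsum hterm)

theorem stmt_10 (p q al be lam mu nu : ℝ) (hp : 1 ≤ p) (hpq : p ≤ q)
    (h : BddOp p q al be lam mu nu) :
    mu + nu + 1 + (be + 1) / q - (al + 1) / p ≤ lam := by
  have hp0 : 0 < p := by linarith
  have hq0 : 0 < q := by linarith
  suffices -(al + 1) / p ≤ -(be + 1) / q - (mu + nu - lam + 1) by
    rw [neg_div, neg_div] at this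
    linarith
  refine le_of_forall_lt fun s hs => ?_
  have hexp := exponent_lt_of_bddOp hp0 hq0 h (s := s) (by rw [lt_div_iff₀ hp0] at hs; linarith)
  rw [lt_sub_iff_add_lt, lt_div_iff₀ hq0]
  linarith
end

section
/- Let λ, μ, ν be real numbers with μ > -1. Then the operator H_{λ,μ,ν}(a)(n) = Σ_{m=1}^∞ m^μ n^ν (m+n)^{-λ} a_m is bounded from ℓ^∞ to ℓ^∞ if and only if λ ≥ μ + ν + 1 and λ > μ + 1. -/
open scoped ENNReal

/-! Boundedness of a nonnegative matrix on `ℓ^∞` is equivalent to uniformly bounded row sums.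
In row `n`, with `y = n + 1`, the kernel is comparable to `x ^ μ * y ^ (ν - λ)` for `x ≤ y` and
to `x ^ (μ - λ) * y ^ ν` for `x ≥ y`. Comparing with the integrals of `t ^ μ` (`μ > -1`) and of
`t ^ (μ - λ)`, the row sum is of order `y ^ (μ + ν + 1 - λ)` once `λ > μ + 1`, so it is bounded
iff `λ ≥ μ + ν + 1`; and the row `n = 0` is comparable to `∑ x ^ (μ - λ)`, which diverges
unless `λ > μ + 1`. -/

open Finset Real

noncomputable def hilbertKernel (lam mu nu x y : ℝ) : ℝ :=
  x ^ mu * y ^ nu / (x + y) ^ lam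

lemma hilbertKernel_nonneg (lam mu nu : ℝ) {x y : ℝ} (hx : 0 ≤ x) (hy : 0 ≤ y) :
    0 ≤ hilbertKernel lam mu nu x y := by
  unfold hilbertKernel; positivity

def IsBoundedOnLinfty {ι : Type*} (k : ℕ → ι → ℝ) : Prop :=
  ∃ C : ℝ≥0∞, C ≠ ⊤ ∧ ∀ a : ℕ → ℝ,
    (⨆ n, ∑' m, ENNReal.ofReal (k m n * |a m|)) ≤ C * ⨆ m, ENNReal.ofReal |a m|

theorem isBoundedOnLinfty_iff {ι : Type*} {k : ℕ → ι → ℝ} (hk : ∀ m n, 0 ≤ k m n) :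
    IsBoundedOnLinfty k ↔ ∃ C : ℝ, ∀ n N, ∑ m ∈ range N, k m n ≤ C := by
  have ofReal_sum (n : ι) (N : ℕ) :
      ENNReal.ofReal (∑ m ∈ range N, k m n) = ∑ m ∈ range N, ENNReal.ofReal (k m n) :=
    ENNReal.ofReal_sum_of_nonneg fun m _ ↦ hk m n
  constructor
  · rintro ⟨C, hC, hbound⟩
    refine ⟨C.toReal, fun n N ↦ (ENNReal.ofReal_le_iff_le_toReal hC).mp ?_⟩
    have hrow := (le_iSup _ n).trans (hbound fun _ ↦ 1)
    simp only [abs_one, mul_one, ENNReal.ofReal_one, ciSup_const] at hrow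
    exact (ofReal_sum n N).trans_le ((ENNReal.sum_le_tsum _).trans hrow)
  · rintro ⟨C, hC⟩
    refine ⟨ENNReal.ofReal C, ENNReal.ofReal_ne_top, fun a ↦ iSup_le fun n ↦ ?_⟩
    have hrow : ∑' m, ENNReal.ofReal (k m n) ≤ ENNReal.ofReal C :=
      ENNReal.tsum_le_of_sum_range_le fun N ↦ (ofReal_sum n N).symm.trans_le
        (ENNReal.ofReal_le_ofReal (hC n N))
    calc ∑' m, ENNReal.ofReal (k m n * |a m|)
        ≤ ∑' m, ENNReal.ofReal (k m n) * ⨆ j, ENNReal.ofReal |a j| := by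
          gcongr with m
          rw [ENNReal.ofReal_mul (hk m n)]
          exact mul_le_mul_right (le_iSup (fun j ↦ ENNReal.ofReal |a j|) m) _
      _ = (∑' m, ENNReal.ofReal (k m n)) * ⨆ j, ENNReal.ofReal |a j| := ENNReal.tsum_mul_right
      _ ≤ ENNReal.ofReal C * ⨆ j, ENNReal.ofReal |a j| := by gcongr

lemma rpow_le_max_one_two_rpow_mul {x z : ℝ} (hx : 0 < x) (hxz : x ≤ z) (hz : z ≤ 2 * x)
    (p : ℝ) : z ^ p ≤ max 1 (2 ^ p) * x ^ p := by
  rcases le_total 0 p with hp | hp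
  · calc z ^ p ≤ (2 * x) ^ p := rpow_le_rpow (hx.le.trans hxz) hz hp
      _ = 2 ^ p * x ^ p := mul_rpow zero_le_two hx.le
      _ ≤ max 1 (2 ^ p) * x ^ p := by gcongr; exact le_max_right _ _
  · calc z ^ p ≤ x ^ p := rpow_le_rpow_of_nonpos hx hxz hp
      _ ≤ max 1 (2 ^ p) * x ^ p := le_mul_of_one_le_left (by positivity) (le_max_left _ _)

section hilbertKernel

variable {lam : ℝ} (mu nu : ℝ) {x y : ℝ}

lemma hilbertKernel_le (hlam : 0 ≤ lam) (hx : 0 < x) (hy : 0 < y) :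
    hilbertKernel lam mu nu x y ≤ x ^ mu * y ^ nu / max x y ^ lam := by
  unfold hilbertKernel
  gcongr
  exact max_le_add_of_nonneg hx.le hy.le

lemma le_hilbertKernel (hx : 0 < x) (hy : 0 < y) :
    x ^ mu * y ^ nu / (max 1 (2 ^ lam) * max x y ^ lam) ≤ hilbertKernel lam mu nu x y := by
  unfold hilbertKernel
  gcongr
  refine rpow_le_max_one_two_rpow_mul (lt_max_of_lt_left hx) (max_le_add_of_nonneg hx.le hy.le)
    ?_ lam
  rw [two_mul]
  exact add_le_add (le_max_left _ _) (le_max_right _ _)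

end hilbertKernel

section sumRpow

variable {mu : ℝ}

lemma sum_range_integral_rpow (hmu : -1 < mu) (N : ℕ) :
    ∑ i ∈ range N, ∫ t in (i : ℝ)..(i + 1 : ℕ), t ^ mu = (N : ℝ) ^ (mu + 1) / (mu + 1) := by
  rw [intervalIntegral.sum_integral_adjacent_intervals fun _ _ ↦
    intervalIntegral.intervalIntegrable_rpow' hmu, integral_rpow (Or.inl hmu)]
  simp [zero_rpow (by linarith : mu + 1 ≠ 0)]

lemma sum_range_rpow_mem_uIcc (hmu : -1 < mu) (N : ℕ) :
    ∑ i ∈ range N, ((i : ℝ) + 1) ^ mu ∈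
      Set.uIcc ((N : ℝ) ^ (mu + 1)) ((N : ℝ) ^ (mu + 1) / (mu + 1)) := by
  have hconst : ∑ _i ∈ range N, (N : ℝ) ^ mu = (N : ℝ) ^ (mu + 1) := by
    rw [sum_const, card_range, nsmul_eq_mul, rpow_add_one' N.cast_nonneg (by linarith), mul_comm]
  have hle (i : ℕ) (hi : i ∈ range N) : (i : ℝ) + 1 ≤ N := by
    exact_mod_cast mem_range.mp hi
  rw [← sum_range_integral_rpow hmu, ← hconst, Set.mem_uIcc]
  rcases le_total mu 0 with hmu0 | hmu0
  · refine Or.inl ⟨sum_le_sum fun i hi ↦ rpow_le_rpow_of_nonpos (by positivity) (hle i hi) hmu0,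
      sum_le_sum fun i _ ↦ ?_⟩
    calc ((i : ℝ) + 1) ^ mu = ∫ _t in (i : ℝ)..(i + 1 : ℕ), ((i : ℝ) + 1) ^ mu := by simp
      _ ≤ ∫ t in (i : ℝ)..(i + 1 : ℕ), t ^ mu := by
        refine intervalIntegral.integral_mono_on_of_le_Ioo (by simp) intervalIntegrable_const
          (intervalIntegral.intervalIntegrable_rpow' hmu) fun t ht ↦ ?_
        refine rpow_le_rpow_of_nonpos (i.cast_nonneg.trans_lt ht.1) ?_ hmu0
        exact_mod_cast ht.2.le
  · refine Or.inr ⟨sum_le_sum fun i _ ↦ ?_,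
      sum_le_sum fun i hi ↦ rpow_le_rpow (by positivity) (hle i hi) hmu0⟩
    calc ∫ t in (i : ℝ)..(i + 1 : ℕ), t ^ mu
        ≤ ∫ _t in (i : ℝ)..(i + 1 : ℕ), ((i : ℝ) + 1) ^ mu := by
          refine intervalIntegral.integral_mono_on (by simp)
            (intervalIntegral.intervalIntegrable_rpow' hmu) intervalIntegrable_const fun t ht ↦ ?_
          refine rpow_le_rpow (i.cast_nonneg.trans ht.1) ?_ hmu0
          exact_mod_cast ht.2
      _ = ((i : ℝ) + 1) ^ mu := by simp

lemma le_sum_range_rpow (hmu : -1 < mu) (N : ℕ) :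
    min 1 (mu + 1)⁻¹ * (N : ℝ) ^ (mu + 1) ≤ ∑ i ∈ range N, ((i : ℝ) + 1) ^ mu := by
  have h := (sum_range_rpow_mem_uIcc hmu N).1
  rwa [min_mul_of_nonneg _ _ (by positivity), one_mul, ← div_eq_inv_mul]

lemma sum_range_rpow_le (hmu : -1 < mu) (N : ℕ) :
    ∑ i ∈ range N, ((i : ℝ) + 1) ^ mu ≤ max 1 (mu + 1)⁻¹ * (N : ℝ) ^ (mu + 1) := by
  have h := (sum_range_rpow_mem_uIcc hmu N).2
  rwa [max_mul_of_nonneg _ _ (by positivity), one_mul, ← div_eq_inv_mul]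

lemma sum_range_rpow_add_le {p b : ℝ} (hp : p < -1) (hb : 0 < b) (N : ℕ) :
    ∑ i ∈ range N, (b + (i + 1 : ℕ)) ^ p ≤ b ^ (p + 1) / (-(p + 1)) := by
  have hb0 : (0 : ℝ) ∉ Set.uIcc b (b + N) := by
    rw [Set.uIcc_of_le (by simp)]
    exact fun h ↦ hb.not_ge h.1
  have hanti : AntitoneOn (fun t : ℝ ↦ t ^ p) (Set.Icc b (b + N)) :=
    fun s hs t _ hst ↦ rpow_le_rpow_of_nonpos (hb.trans_le hs.1) hst (by linarith)
  calc ∑ i ∈ range N, (b + (i + 1 : ℕ)) ^ p ≤ ∫ t in b..b + N, t ^ p := hanti.sum_le_integral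
    _ = ((b + N) ^ (p + 1) - b ^ (p + 1)) / (p + 1) :=
        integral_rpow (Or.inr ⟨by linarith, hb0⟩)
    _ ≤ b ^ (p + 1) / (-(p + 1)) := by
        rw [div_neg, ← neg_div]
        refine div_le_div_of_nonpos_of_le (by linarith) ?_
        linarith [rpow_nonneg (by positivity : 0 ≤ b + N) (p + 1)]

end sumRpow

section rowSums

variable {lam mu nu : ℝ}

lemma sum_range_hilbertKernel_head_le (hmu : -1 < mu) (hlam : 0 ≤ lam) (h : mu + nu + 1 ≤ lam)
    (n : ℕ) :
    ∑ m ∈ range (n + 1), hilbertKernel lam mu nu ((m : ℝ) + 1) ((n : ℝ) + 1) ≤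
      max 1 (mu + 1)⁻¹ := by
  set y : ℝ := (n : ℝ) + 1
  have hy : 1 ≤ y := by simp [y]
  calc ∑ m ∈ range (n + 1), hilbertKernel lam mu nu ((m : ℝ) + 1) y
      ≤ ∑ m ∈ range (n + 1), y ^ nu / y ^ lam * ((m : ℝ) + 1) ^ mu := by
        refine sum_le_sum fun m hm ↦
          (hilbertKernel_le mu nu hlam (by positivity) (by positivity)).trans_eq ?_
        have hmy : (m : ℝ) + 1 ≤ y := by simpa [y] using mem_range.mp hm
        rw [max_eq_right hmy]
        ring
    _ ≤ y ^ nu / y ^ lam * (max 1 (mu + 1)⁻¹ * y ^ (mu + 1)) := by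
        rw [← mul_sum]
        gcongr
        simpa [y] using sum_range_rpow_le hmu (n + 1)
    _ = max 1 (mu + 1)⁻¹ * y ^ (mu + nu + 1 - lam) := by
        have hy0 : 0 < y := by positivity
        rw [show mu + nu + 1 - lam = nu - lam + (mu + 1) by ring, rpow_add hy0 (nu - lam),
          rpow_sub hy0]
        ring
    _ ≤ max 1 (mu + 1)⁻¹ :=
        mul_le_of_le_one_right (by positivity) (rpow_le_one_of_one_le_of_nonpos hy (by linarith))

lemma sum_range_hilbertKernel_tail_le (hlam : 0 ≤ lam) (h : mu + nu + 1 ≤ lam)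
    (hlt : mu + 1 < lam) (n N : ℕ) :
    ∑ i ∈ range N, hilbertKernel lam mu nu (((n + 1 + i : ℕ) : ℝ) + 1) ((n : ℝ) + 1) ≤
      (lam - mu - 1)⁻¹ := by
  set y : ℝ := (n : ℝ) + 1
  have hy : 1 ≤ y := by simp [y]
  calc ∑ i ∈ range N, hilbertKernel lam mu nu (((n + 1 + i : ℕ) : ℝ) + 1) y
      ≤ ∑ i ∈ range N, y ^ nu * (y + (i + 1 : ℕ)) ^ (mu - lam) := by
        refine sum_le_sum fun i _ ↦ ?_
        have hx : ((n + 1 + i : ℕ) : ℝ) + 1 = y + (i + 1 : ℕ) := by push_cast [y]; ring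
        have hyx : y ≤ y + (i + 1 : ℕ) := le_add_of_nonneg_right (by positivity)
        rw [hx]
        refine (hilbertKernel_le mu nu hlam (by positivity) (by positivity)).trans_eq ?_
        rw [max_eq_left hyx, rpow_sub (by positivity)]
        ring
    _ ≤ y ^ nu * (y ^ (mu - lam + 1) / (-(mu - lam + 1))) := by
        rw [← mul_sum]
        gcongr
        exact sum_range_rpow_add_le (by linarith) (by positivity) N
    _ = y ^ (mu + nu + 1 - lam) * (lam - mu - 1)⁻¹ := by
        rw [mul_div_assoc', ← rpow_add (by positivity), div_eq_mul_inv]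
        ring_nf
    _ ≤ (lam - mu - 1)⁻¹ :=
        mul_le_of_le_one_left (by simp; linarith) (rpow_le_one_of_one_le_of_nonpos hy (by linarith))

lemma sum_range_hilbertKernel_le (hmu : -1 < mu) (h : mu + nu + 1 ≤ lam) (hlt : mu + 1 < lam)
    (n N : ℕ) :
    ∑ m ∈ range N, hilbertKernel lam mu nu ((m : ℝ) + 1) ((n : ℝ) + 1) ≤
      max 1 (mu + 1)⁻¹ + (lam - mu - 1)⁻¹ := by
  have hnonneg (m : ℕ) : 0 ≤ hilbertKernel lam mu nu ((m : ℝ) + 1) ((n : ℝ) + 1) :=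
    hilbertKernel_nonneg _ _ _ (by positivity) (by positivity)
  calc ∑ m ∈ range N, hilbertKernel lam mu nu ((m : ℝ) + 1) ((n : ℝ) + 1)
      ≤ ∑ m ∈ range (n + 1 + N), hilbertKernel lam mu nu ((m : ℝ) + 1) ((n : ℝ) + 1) :=
        sum_le_sum_of_subset_of_nonneg (range_mono (by omega)) fun m _ _ ↦ hnonneg m
    _ ≤ _ := by
        rw [sum_range_add]
        exact add_le_add (sum_range_hilbertKernel_head_le hmu (by linarith) h n)
          (sum_range_hilbertKernel_tail_le (by linarith) h hlt n N)

end rowSums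

section necessity

variable {lam mu nu : ℝ}

lemma lt_of_sum_range_hilbertKernel_le {C : ℝ}
    (hC : ∀ N, ∑ m ∈ range N, hilbertKernel lam mu nu ((m : ℝ) + 1) 1 ≤ C) : mu + 1 < lam := by
  have hsum : Summable fun m : ℕ ↦ hilbertKernel lam mu nu ((m : ℝ) + 1) 1 :=
    summable_of_sum_range_le (fun m ↦ hilbertKernel_nonneg _ _ _ (by positivity) zero_le_one) hC
  have hlower (m : ℕ) :
      ((m : ℝ) + 1) ^ (mu - lam) / max 1 (2 ^ lam) ≤ hilbertKernel lam mu nu ((m : ℝ) + 1) 1 := by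
    refine Eq.trans_le ?_ (le_hilbertKernel mu nu (by positivity) one_pos)
    rw [max_eq_left (le_add_of_nonneg_left m.cast_nonneg : (1 : ℝ) ≤ m + 1), one_rpow, mul_one,
      rpow_sub (by positivity)]
    ring
  have hpow : Summable fun m : ℕ ↦ ((m + 1 : ℕ) : ℝ) ^ (mu - lam) := by
    have := (hsum.of_nonneg_of_le (fun m ↦ by positivity) hlower)
    push_cast
    exact (summable_div_const_iff (by positivity)).mp this
  have := Real.summable_nat_rpow.mp ((summable_nat_add_iff 1).mp hpow)
  linarith

lemma le_sum_range_hilbertKernel (hmu : -1 < mu) (n : ℕ) :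
    min 1 (mu + 1)⁻¹ / max 1 (2 ^ lam) * ((n : ℝ) + 1) ^ (mu + nu + 1 - lam) ≤
      ∑ m ∈ range (n + 1), hilbertKernel lam mu nu ((m : ℝ) + 1) ((n : ℝ) + 1) := by
  set y : ℝ := (n : ℝ) + 1
  have hy0 : 0 < y := by positivity
  calc min 1 (mu + 1)⁻¹ / max 1 (2 ^ lam) * y ^ (mu + nu + 1 - lam)
      = y ^ nu / (max 1 (2 ^ lam) * y ^ lam) * (min 1 (mu + 1)⁻¹ * y ^ (mu + 1)) := by
        rw [show mu + nu + 1 - lam = nu - lam + (mu + 1) by ring, rpow_add hy0 (nu - lam),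
          rpow_sub hy0]
        ring
    _ ≤ y ^ nu / (max 1 (2 ^ lam) * y ^ lam) * ∑ m ∈ range (n + 1), ((m : ℝ) + 1) ^ mu := by
        gcongr
        simpa [y] using le_sum_range_rpow hmu (n + 1)
    _ ≤ ∑ m ∈ range (n + 1), hilbertKernel lam mu nu ((m : ℝ) + 1) y := by
        rw [mul_sum]
        refine sum_le_sum fun m hm ↦
          Eq.trans_le ?_ (le_hilbertKernel mu nu (by positivity) hy0)
        have hmy : (m : ℝ) + 1 ≤ y := by simpa [y] using mem_range.mp hm
        rw [max_eq_right hmy]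
        ring

lemma le_of_sum_range_hilbertKernel_le (hmu : -1 < mu) {C : ℝ}
    (hC : ∀ n, ∑ m ∈ range (n + 1), hilbertKernel lam mu nu ((m : ℝ) + 1) ((n : ℝ) + 1) ≤ C) :
    mu + nu + 1 ≤ lam := by
  by_contra! hlt
  have hgrowth : Filter.Tendsto
      (fun n : ℕ ↦ min 1 (mu + 1)⁻¹ / max 1 (2 ^ lam) * ((n : ℝ) + 1) ^ (mu + nu + 1 - lam))
      Filter.atTop Filter.atTop := by
    have hc : 0 < min 1 (mu + 1)⁻¹ := lt_min one_pos (inv_pos.mpr (by linarith))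
    refine Filter.Tendsto.const_mul_atTop (by positivity) ?_
    exact (tendsto_rpow_atTop (by linarith)).comp
      (Filter.tendsto_atTop_add_const_right _ 1 tendsto_natCast_atTop_atTop)
  obtain ⟨n, hn⟩ := (hgrowth.eventually_gt_atTop C).exists
  exact hn.not_ge ((le_sum_range_hilbertKernel hmu n).trans (hC n))

end necessity

theorem stmt_14 (lam mu nu : ℝ) (hmu : -1 < mu) :
    (∃ C : ℝ≥0∞, C ≠ ⊤ ∧ ∀ a : ℕ → ℝ,
        (⨆ n : ℕ, Hop lam mu nu a n) ≤ C * ⨆ m : ℕ, ENNReal.ofReal |a m|) ↔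
      (mu + nu + 1 ≤ lam ∧ mu + 1 < lam) := by
  change IsBoundedOnLinfty (fun m n : ℕ ↦ hilbertKernel lam mu nu ((m : ℝ) + 1) ((n : ℝ) + 1)) ↔ _
  rw [isBoundedOnLinfty_iff fun m n ↦ hilbertKernel_nonneg _ _ _ (by positivity) (by positivity)]
  constructor
  · rintro ⟨C, hC⟩
    exact ⟨le_of_sum_range_hilbertKernel_le hmu fun n ↦ hC n (n + 1),
      lt_of_sum_range_hilbertKernel_le fun N ↦ by simpa using hC 0 N⟩
  · rintro ⟨h, hlt⟩
    exact ⟨_, sum_range_hilbertKernel_le hmu h hlt⟩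
end

section
/- Let λ, μ, ν, α, β be real numbers with λ = μ + ν + 1 + β − α and −ν < β + 1 < λ − ν. Then sup over x > 0 of ∫₀^∞ x^{μ−α} y^{ν+β} (x+y)^{-λ} dy = B(ν + β + 1, λ − ν − β − 1) = B(μ − α, ν + β + 1), and in particular the integral operator H_{λ,μ,ν} is bounded from L^1_α(ℝ₊) to L^1_β(ℝ₊) with norm equal to this Beta value. -/
/-!
Substituting `y = x t` turns the column integral `∫ x^(μ-α) y^(ν+β) (x+y)^(-λ) dy` into
`B(ν+β+1, λ-ν-β-1)` for every `x > 0`: the powers of `x` cancel because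
`λ = μ+ν+1+β-α`. By Tonelli, `‖H f‖_{L¹_β} = B ‖f‖_{L¹_α}` for every measurable `f`, which
gives the bound, and equality at `f = x^(-α) 1_{(0,1)}` shows that it is sharp. The symmetry
of `B` comes from `t ↦ 1/t`.
-/

open MeasureTheory
open scoped ENNReal

noncomputable def betaFn (x y : ℝ) : ℝ :=
  ∫ t in Set.Ioi (0:ℝ), t ^ (x - 1) / (1 + t) ^ (x + y)

/-- Weighted `L^p_θ(ℝ₊)` norm, valued in `ℝ≥0∞`. -/
noncomputable def LNorm (p th : ℝ) (f : ℝ → ℝ) : ℝ≥0∞ :=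
  (∫⁻ x in Set.Ioi (0:ℝ), ENNReal.ofReal (|f x| ^ p * x ^ th)) ^ (1 / p)

/-- The Hilbert-type integral operator `H_{λ,μ,ν}`, applied to `|f|`,
valued in `ℝ≥0∞` (the kernel is nonnegative). -/
noncomputable def HInt (lam mu nu : ℝ) (f : ℝ → ℝ) (y : ℝ) : ℝ≥0∞ :=
  ∫⁻ x in Set.Ioi (0:ℝ), ENNReal.ofReal (x ^ mu * y ^ nu / (x + y) ^ lam * |f x|)

/-- Weighted `L^p_β` norm of `H_{λ,μ,ν} f`. -/
noncomputable def outNormInt (p be lam mu nu : ℝ) (f : ℝ → ℝ) : ℝ≥0∞ :=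
  (∫⁻ y in Set.Ioi (0:ℝ), (HInt lam mu nu f y) ^ p * ENNReal.ofReal (y ^ be)) ^ (1 / p)

open Set Real

theorem betaFn_comm (p q : ℝ) : betaFn p q = betaFn q p := by
  rw [betaFn, betaFn, ← integral_comp_rpow_Ioi (fun t => t ^ (q - 1) / (1 + t) ^ (q + p))
    (p := -1) (by norm_num)]
  refine setIntegral_congr_fun measurableSet_Ioi fun x (hx : 0 < x) => ?_
  have hx1 : 0 < 1 + x := by linarith
  simp only [smul_eq_mul, abs_neg, abs_one, one_mul]
  rw [Real.rpow_neg_one, Real.inv_rpow hx.le, ← Real.rpow_neg hx.le,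
    show 1 + x⁻¹ = (1 + x) / x by field_simp; ring, Real.div_rpow hx1.le hx.le,
    div_div_eq_mul_div, ← Real.rpow_add hx, ← mul_div_assoc, ← Real.rpow_add hx,
    show -1 - 1 + (-(q - 1) + (q + p)) = p - 1 by ring, add_comm q p]

theorem betaFn_add_one_sub (a l : ℝ) :
    betaFn (a + 1) (l - a - 1) = ∫ t in Ioi 0, t ^ a / (1 + t) ^ l := by
  rw [betaFn, add_sub_cancel_right, show a + 1 + (l - a - 1) = l by ring]

theorem integrableOn_rpow_div_one_add_rpow_Ioi {a l : ℝ} (ha : -1 < a) (hl : a + 1 < l) :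
    IntegrableOn (fun t : ℝ => t ^ a / (1 + t) ^ l) (Ioi 0) := by
  have hmeas : AEStronglyMeasurable (fun t : ℝ => t ^ a / (1 + t) ^ l) volume :=
    (by fun_prop : Measurable fun t : ℝ => t ^ a / (1 + t) ^ l).aestronglyMeasurable
  have h_near : IntegrableOn (fun t : ℝ => t ^ a / (1 + t) ^ l) (Ioc 0 1) := by
    have hpow : IntegrableOn (fun t : ℝ => t ^ a) (Ioc 0 1) :=
      (intervalIntegrable_iff_integrableOn_Ioc_of_le zero_le_one).1
        (intervalIntegral.intervalIntegrable_rpow' ha)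
    refine hpow.mono' hmeas.restrict <| (ae_restrict_iff' measurableSet_Ioc).2 <|
      .of_forall fun t ⟨(ht : 0 < t), _⟩ => ?_
    rw [Real.norm_of_nonneg (by positivity)]
    exact div_le_self (by positivity) (Real.one_le_rpow (by linarith) (by linarith))
  have h_far : IntegrableOn (fun t : ℝ => t ^ a / (1 + t) ^ l) (Ioi 1) := by
    refine (integrableOn_Ioi_rpow_of_lt (show a - l < -1 by linarith) one_pos).mono'
      hmeas.restrict <| (ae_restrict_iff' measurableSet_Ioi).2 <|
        .of_forall fun t (ht : 1 < t) => ?_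
    have ht0 : 0 < t := one_pos.trans ht
    rw [Real.norm_of_nonneg (by positivity), Real.rpow_sub ht0]
    gcongr <;> linarith
  simpa only [Ioc_union_Ioi_eq_Ioi zero_le_one] using h_near.union h_far

theorem mul_rpow_div_add_mul_rpow {a l c t : ℝ} (hc : 0 < c) (ht : 0 < t) :
    (c * t) ^ a / (c + c * t) ^ l = c ^ (a - l) * (t ^ a / (1 + t) ^ l) := by
  rw [show c + c * t = c * (1 + t) by ring, Real.mul_rpow hc.le ht.le,
    Real.mul_rpow hc.le (by linarith), Real.rpow_sub hc]
  field_simp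

theorem integrableOn_rpow_div_add_rpow_Ioi {a l c : ℝ} (ha : -1 < a) (hl : a + 1 < l)
    (hc : 0 < c) : IntegrableOn (fun y : ℝ => y ^ a / (c + y) ^ l) (Ioi 0) := by
  rw [← mul_zero c, ← integrableOn_Ioi_comp_mul_left_iff _ _ hc]
  exact IntegrableOn.congr_fun ((integrableOn_rpow_div_one_add_rpow_Ioi ha hl).const_mul _)
    (fun t (ht : 0 < t) => (mul_rpow_div_add_mul_rpow hc ht).symm) measurableSet_Ioi

theorem integral_rpow_div_add_rpow_Ioi (a l : ℝ) {c : ℝ} (hc : 0 < c) :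
    ∫ y in Ioi 0, y ^ a / (c + y) ^ l = c ^ (a + 1 - l) * betaFn (a + 1) (l - a - 1) := by
  have hsub := integral_comp_mul_left_Ioi (fun y => y ^ a / (c + y) ^ l) 0 hc
  rw [mul_zero, setIntegral_congr_fun measurableSet_Ioi fun t ht => mul_rpow_div_add_mul_rpow hc ht,
    integral_const_mul, smul_eq_mul, ← betaFn_add_one_sub] at hsub
  rw [← mul_inv_cancel_left₀ hc.ne' (∫ y in Ioi 0, y ^ a / (c + y) ^ l), ← hsub,
    ← mul_assoc, add_sub_right_comm, Real.rpow_add hc, Real.rpow_one, mul_comm c]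

theorem lintegral_rpow_div_add_rpow_Ioi {a l : ℝ} (ha : -1 < a) (hl : a + 1 < l) {c : ℝ}
    (hc : 0 < c) :
    ∫⁻ y in Ioi 0, ENNReal.ofReal (y ^ a / (c + y) ^ l)
      = ENNReal.ofReal (c ^ (a + 1 - l)) * ENNReal.ofReal (betaFn (a + 1) (l - a - 1)) := by
  rw [← ofReal_integral_eq_lintegral_ofReal (integrableOn_rpow_div_add_rpow_Ioi ha hl hc)
      ((ae_restrict_iff' measurableSet_Ioi).2 (.of_forall fun y (hy : 0 < y) => by positivity)),
    integral_rpow_div_add_rpow_Ioi a l hc, ENNReal.ofReal_mul (by positivity)]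

section Envelope

variable {α : Type*} [MeasurableSpace α]

theorem exists_measurable_le_forall_lintegral_eq_of_absolutelyContinuous (μ : Measure α)
    [SigmaFinite μ] (f : α → ℝ≥0∞) :
    ∃ g : α → ℝ≥0∞, Measurable g ∧ g ≤ f ∧
      ∀ ν : Measure α, ν ≪ μ → ∫⁻ a, f a ∂ν = ∫⁻ a, g a ∂ν := by
  obtain ⟨g, hgm, hgf, hset⟩ := exists_measurable_le_forall_setLIntegral_eq μ f
  refine ⟨g, hgm, hgf, fun ν hν => le_antisymm ?_ (lintegral_mono hgf)⟩
  obtain ⟨φ, hφm, hφf, hφeq⟩ := exists_measurable_le_lintegral_eq ν f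
  have hφg : φ ≤ᵐ[μ] g := ae_le_of_forall_setLIntegral_le_of_sigmaFinite hφm
    fun s _ _ => (setLIntegral_mono' ‹_› fun a _ => hφf a).trans (hset s).le
  exact hφeq.le.trans (lintegral_mono_ae (hν.ae_le hφg))

theorem exists_measurable_le_forall_lintegral_mul_eq (μ : Measure α) [SigmaFinite μ]
    (f : α → ℝ≥0∞) :
    ∃ g : α → ℝ≥0∞, Measurable g ∧ g ≤ f ∧
      ∀ k : α → ℝ≥0∞, Measurable k → (∀ a, k a ≠ ∞) →
        ∫⁻ a, k a * f a ∂μ = ∫⁻ a, k a * g a ∂μ := by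
  obtain ⟨g, hgm, hgf, hg⟩ :=
    exists_measurable_le_forall_lintegral_eq_of_absolutelyContinuous μ f
  refine ⟨g, hgm, hgf, fun k hk hk_top => ?_⟩
  have hk_lt : ∀ᵐ a ∂μ, k a < ∞ := .of_forall fun a => (hk_top a).lt_top
  have := hg _ (withDensity_absolutelyContinuous μ k)
  rwa [lintegral_withDensity_eq_lintegral_mul_non_measurable μ hk hk_lt,
    lintegral_withDensity_eq_lintegral_mul_non_measurable μ hk hk_lt] at this

end Envelope

section Kernel

variable {al be lam mu nu : ℝ}

theorem integral_kernel_column (hlam : lam = mu + nu + 1 + be - al) {x : ℝ} (hx : 0 < x) :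
    ∫ y in Ioi 0, x ^ (mu - al) * y ^ (nu + be) / (x + y) ^ lam
      = betaFn (nu + be + 1) (lam - nu - be - 1) := by
  simp_rw [mul_div_assoc]
  rw [integral_const_mul, integral_rpow_div_add_rpow_Ioi _ _ hx, ← mul_assoc,
    ← Real.rpow_add hx, show mu - al + (nu + be + 1 - lam) = 0 by rw [hlam]; ring,
    Real.rpow_zero, one_mul,
    show lam - (nu + be) - 1 = lam - nu - be - 1 by ring]

theorem lintegral_kernel_column (hlam : lam = mu + nu + 1 + be - al) (h1 : -nu < be + 1)
    (h2 : be + 1 < lam - nu) {x : ℝ} (hx : 0 < x) :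
    ∫⁻ y in Ioi 0, ENNReal.ofReal (x ^ mu * y ^ (nu + be) / (x + y) ^ lam)
      = ENNReal.ofReal (x ^ al) * ENNReal.ofReal (betaFn (nu + be + 1) (lam - nu - be - 1)) := by
  simp_rw [mul_div_assoc, ENNReal.ofReal_mul (Real.rpow_nonneg hx.le mu)]
  rw [lintegral_const_mul _ (by fun_prop), lintegral_rpow_div_add_rpow_Ioi (by linarith)
      (by linarith) hx, ← mul_assoc, ← ENNReal.ofReal_mul (by positivity), ← Real.rpow_add hx,
    show mu + (nu + be + 1 - lam) = al by rw [hlam]; ring,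
    show lam - (nu + be) - 1 = lam - nu - be - 1 by ring]

theorem lintegral_lintegral_kernel_mul (hlam : lam = mu + nu + 1 + be - al)
    (h1 : -nu < be + 1) (h2 : be + 1 < lam - nu) {v : ℝ → ℝ≥0∞} (hv : Measurable v) :
    ∫⁻ y in Ioi 0, (∫⁻ x in Ioi 0,
        ENNReal.ofReal (x ^ mu * y ^ nu / (x + y) ^ lam) * v x) * ENNReal.ofReal (y ^ be)
      = ENNReal.ofReal (betaFn (nu + be + 1) (lam - nu - be - 1)) *
          ∫⁻ x in Ioi 0, ENNReal.ofReal (x ^ al) * v x := by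
  have hmerge : ∀ y ∈ Ioi (0:ℝ), ∀ x ∈ Ioi (0:ℝ),
      ENNReal.ofReal (x ^ mu * y ^ nu / (x + y) ^ lam) * v x * ENNReal.ofReal (y ^ be)
        = ENNReal.ofReal (x ^ mu * y ^ (nu + be) / (x + y) ^ lam) * v x := by
    intro y (hy : 0 < y) x (hx : 0 < x)
    rw [mul_right_comm, ← ENNReal.ofReal_mul (by positivity), Real.rpow_add hy]
    ring_nf
  calc _ = ∫⁻ y in Ioi 0, ∫⁻ x in Ioi 0,
          ENNReal.ofReal (x ^ mu * y ^ (nu + be) / (x + y) ^ lam) * v x := by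
        refine setLIntegral_congr_fun measurableSet_Ioi fun y hy => ?_
        rw [← lintegral_mul_const _ (by fun_prop)]
        exact setLIntegral_congr_fun measurableSet_Ioi (hmerge y hy)
    _ = ∫⁻ x in Ioi 0, ∫⁻ y in Ioi 0,
          ENNReal.ofReal (x ^ mu * y ^ (nu + be) / (x + y) ^ lam) * v x :=
        lintegral_lintegral_swap (by fun_prop)
    _ = ∫⁻ x in Ioi 0, ENNReal.ofReal (betaFn (nu + be + 1) (lam - nu - be - 1)) *
          (ENNReal.ofReal (x ^ al) * v x) := by
        refine setLIntegral_congr_fun measurableSet_Ioi fun x (hx : 0 < x) => ?_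
        rw [lintegral_mul_const _ (by fun_prop), lintegral_kernel_column hlam h1 h2 hx]
        ring
    _ = _ := lintegral_const_mul _ (by fun_prop)

end Kernel

theorem HInt_eq_lintegral_mul (lam mu nu : ℝ) (f : ℝ → ℝ) {y : ℝ} (hy : 0 < y) :
    HInt lam mu nu f y
      = ∫⁻ x in Ioi 0,
          ENNReal.ofReal (x ^ mu * y ^ nu / (x + y) ^ lam) * ENNReal.ofReal |f x| :=
  setLIntegral_congr_fun measurableSet_Ioi fun x (hx : 0 < x) =>
    ENNReal.ofReal_mul (by positivity)

theorem outNormInt_one (be lam mu nu : ℝ) (f : ℝ → ℝ) :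
    outNormInt 1 be lam mu nu f
      = ∫⁻ y in Ioi 0, HInt lam mu nu f y * ENNReal.ofReal (y ^ be) := by
  simp only [outNormInt, ENNReal.rpow_one, div_one]

theorem LNorm_one (al : ℝ) (f : ℝ → ℝ) :
    LNorm 1 al f = ∫⁻ x in Ioi 0, ENNReal.ofReal (x ^ al) * ENNReal.ofReal |f x| := by
  simp only [LNorm, Real.rpow_one, ENNReal.rpow_one, div_one]
  exact setLIntegral_congr_fun measurableSet_Ioi fun x (hx : 0 < x) => by
    rw [mul_comm, ENNReal.ofReal_mul (by positivity)]

section Bounds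

variable {al be lam mu nu : ℝ}

theorem outNormInt_one_eq_of_lintegral_mul_eq (hlam : lam = mu + nu + 1 + be - al)
    (h1 : -nu < be + 1) (h2 : be + 1 < lam - nu) {f : ℝ → ℝ} {g : ℝ → ℝ≥0∞}
    (hg : Measurable g)
    (hfg : ∀ k : ℝ → ℝ≥0∞, Measurable k → (∀ x, k x ≠ ∞) →
      ∫⁻ x in Ioi 0, k x * ENNReal.ofReal |f x| = ∫⁻ x in Ioi 0, k x * g x) :
    outNormInt 1 be lam mu nu f
      = ENNReal.ofReal (betaFn (nu + be + 1) (lam - nu - be - 1)) *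
          ∫⁻ x in Ioi 0, ENNReal.ofReal (x ^ al) * g x := by
  rw [outNormInt_one, ← lintegral_lintegral_kernel_mul hlam h1 h2 hg]
  refine setLIntegral_congr_fun measurableSet_Ioi fun y (hy : 0 < y) => ?_
  rw [HInt_eq_lintegral_mul _ _ _ _ hy, hfg _ (by fun_prop) fun _ => ENNReal.ofReal_ne_top]

theorem outNormInt_one_eq_of_measurable (hlam : lam = mu + nu + 1 + be - al)
    (h1 : -nu < be + 1) (h2 : be + 1 < lam - nu) {f : ℝ → ℝ} (hf : Measurable f) :
    outNormInt 1 be lam mu nu f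
      = ENNReal.ofReal (betaFn (nu + be + 1) (lam - nu - be - 1)) * LNorm 1 al f := by
  rw [outNormInt_one_eq_of_lintegral_mul_eq hlam h1 h2 (g := fun x => ENNReal.ofReal |f x|)
    (by fun_prop) fun _ _ _ => rfl, LNorm_one]

/-- `f` need not be measurable: `|f|` is replaced by a measurable minorant that no finite
measurable weight can tell apart from it under `∫⁻`. -/
theorem outNormInt_one_le (hlam : lam = mu + nu + 1 + be - al) (h1 : -nu < be + 1)
    (h2 : be + 1 < lam - nu) (f : ℝ → ℝ) :
    outNormInt 1 be lam mu nu f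
      ≤ ENNReal.ofReal (betaFn (nu + be + 1) (lam - nu - be - 1)) * LNorm 1 al f := by
  obtain ⟨g, hgm, hgf, hg⟩ := exists_measurable_le_forall_lintegral_mul_eq
    (volume.restrict (Ioi (0:ℝ))) fun x => ENNReal.ofReal |f x|
  rw [outNormInt_one_eq_of_lintegral_mul_eq hlam h1 h2 hgm hg, LNorm_one]
  gcongr with x
  exact hgf x

end Bounds

theorem LNorm_one_indicator_rpow_neg (al : ℝ) :
    LNorm 1 al ((Ioo 0 1).indicator fun x => x ^ (-al)) = 1 := by
  have hone : ∀ x ∈ Ioi (0:ℝ), ENNReal.ofReal (x ^ al) *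
      ENNReal.ofReal |(Ioo 0 1).indicator (fun x => x ^ (-al)) x|
        = (Ioo 0 1).indicator 1 x := by
    intro x (hx : 0 < x)
    by_cases hmem : x ∈ Ioo 0 1
    · rw [indicator_of_mem hmem, indicator_of_mem hmem, abs_of_nonneg (by positivity),
        ← ENNReal.ofReal_mul (by positivity), ← Real.rpow_add hx, add_neg_cancel,
        Real.rpow_zero, ENNReal.ofReal_one, Pi.one_apply]
    · simp [indicator_of_notMem hmem]
  rw [LNorm_one, setLIntegral_congr_fun measurableSet_Ioi hone,
    lintegral_indicator measurableSet_Ioo, Measure.restrict_restrict measurableSet_Ioo,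
    inter_eq_self_of_subset_left Ioo_subset_Ioi_self]
  simp

theorem stmt_18 (al be lam mu nu : ℝ) (hlam : lam = mu + nu + 1 + be - al)
    (h1 : -nu < be + 1) (h2 : be + 1 < lam - nu) :
    (⨆ x : {x : ℝ // 0 < x},
        ∫ y in Set.Ioi (0:ℝ), (x : ℝ) ^ (mu - al) * y ^ (nu + be) / ((x : ℝ) + y) ^ lam) =
        betaFn (nu + be + 1) (lam - nu - be - 1) ∧
      betaFn (nu + be + 1) (lam - nu - be - 1) = betaFn (mu - al) (nu + be + 1) ∧
      (∀ f : ℝ → ℝ,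
          outNormInt 1 be lam mu nu f ≤
            ENNReal.ofReal (betaFn (nu + be + 1) (lam - nu - be - 1)) * LNorm 1 al f) ∧
      (∀ C : ℝ≥0∞,
        (∀ f : ℝ → ℝ, outNormInt 1 be lam mu nu f ≤ C * LNorm 1 al f) →
          ENNReal.ofReal (betaFn (nu + be + 1) (lam - nu - be - 1)) ≤ C) := by
  refine ⟨?_, ?_, outNormInt_one_le hlam h1 h2, fun C hC => ?_⟩
  · have : Nonempty {x : ℝ // 0 < x} := ⟨⟨1, one_pos⟩⟩
    exact (iSup_congr fun x => integral_kernel_column hlam x.2).trans ciSup_const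
  · rw [show lam - nu - be - 1 = mu - al by rw [hlam]; ring, betaFn_comm]
  · have hextremal := hC ((Ioo 0 1).indicator fun x => x ^ (-al))
    rwa [outNormInt_one_eq_of_measurable hlam h1 h2 ((by fun_prop : Measurable fun x : ℝ =>
        x ^ (-al)).indicator measurableSet_Ioo), LNorm_one_indicator_rpow_neg, mul_one,
      mul_one] at hextremal
end
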